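/- arXiv:2307.04264 — 2 statements merged into one kernel-verified Lean document; each statement's English description precedes it below -/
import Mathlib

section
/- Let d = 1, σ > 0, δ > 0, x₀ = 0, and define K(x) = σ² + δ²/2 − x²/2 for |x| < δ and K(x) = σ² for |x| ≥ δ. Define f∞(x) = (m₁/√(2πσ²))·exp(−x²/(2σ²)) for |x| ≥ δ and f∞(x) = m₂/(2δ) for |x| < δ, where m₁, m₂ > 0 satisfy m₂/(2δ) = (m₁/√(2πσ²))·exp(−δ²/(2σ²)). Then f∞ is continuous and, for every x with |x| ≠ δ, satisfies x·f∞(x) + (K(x)·f∞(x))' = 0. -/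
/-!
Away from `|x| = δ` both `K` and `f∞` are locally given by a single smooth formula. Inside,
`K f∞` is the constant `m₂ / (2δ)` times `σ² + δ²/2 - x²/2`, whose derivative `-x` cancels the
drift. Outside, `K = σ²` and `f∞` is a centred Gaussian of variance `σ²`, for which
`σ² g' = -x g`. Continuity across `|x| = δ` is exactly the matching condition on `m₁, m₂`.
-/

open Filter Topology

section PiecewiseAbs

variable {F a b : ℝ → ℝ} {δ : ℝ}

lemma eventuallyEq_of_abs_lt (hF : ∀ y, F y = if |y| < δ then a y else b y) {x : ℝ}
    (hx : |x| < δ) : F =ᶠ[𝓝 x] a := by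
  filter_upwards [(isOpen_lt continuous_abs continuous_const).mem_nhds hx] with y hy
  rw [hF y, if_pos hy]

lemma eventuallyEq_of_lt_abs (hF : ∀ y, F y = if |y| < δ then a y else b y) {x : ℝ}
    (hx : δ < |x|) : F =ᶠ[𝓝 x] b := by
  filter_upwards [(isOpen_lt continuous_const continuous_abs).mem_nhds hx] with y hy
  rw [hF y, if_neg (not_lt.mpr hy.le)]

lemma continuous_of_eq_ite_abs_lt (hF : ∀ y, F y = if |y| < δ then a y else b y)
    (ha : Continuous a) (hb : Continuous b) (hab : ∀ y, |y| = δ → a y = b y) :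
    Continuous F := by
  rw [show F = fun y => if |y| < δ then a y else b y from funext hF]
  exact Continuous.if (fun y hy => hab y (frontier_lt_subset_eq continuous_abs continuous_const hy))
    ha hb

end PiecewiseAbs

lemma hasDerivAt_sub_sq_div_two_mul (a c x : ℝ) :
    HasDerivAt (fun y => (a - y ^ 2 / 2) * c) (-x * c) x :=
  ((((hasDerivAt_pow 2 x).div_const 2).const_sub a).mul_const c).congr_deriv (by ring)

lemma hasDerivAt_mul_exp_neg_sq_div (A s x : ℝ) :
    HasDerivAt (fun y => A * Real.exp (-y ^ 2 / s))
      (-(2 * x / s) * (A * Real.exp (-x ^ 2 / s))) x :=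
  ((((hasDerivAt_pow 2 x).neg.div_const s).exp).const_mul A).congr_deriv
    (by simp only [Pi.neg_apply]; ring)

theorem stmt_3_general (σ δ m₁ m₂ : ℝ) (hσ : 0 < σ)
    (hmatch : m₂ / (2*δ) = m₁ / Real.sqrt (2 * Real.pi * σ^2) * Real.exp (-δ^2/(2*σ^2)))
    (K finfty : ℝ → ℝ)
    (hK : ∀ x, K x = if |x| < δ then σ^2 + δ^2/2 - x^2/2 else σ^2)
    (hf : ∀ x, finfty x = if |x| < δ then m₂ / (2*δ)
      else m₁ / Real.sqrt (2 * Real.pi * σ^2) * Real.exp (-x^2/(2*σ^2))) :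
    Continuous finfty ∧
      ∀ x, |x| ≠ δ →
        x * finfty x + deriv (fun y => K y * finfty y) x = 0 := by
  refine ⟨continuous_of_eq_ite_abs_lt hf continuous_const (by fun_prop) fun y hy => ?_,
    fun x hx => ?_⟩
  · rw [hmatch, ← sq_abs y, hy]
  rcases lt_or_gt_of_ne hx with hin | hout
  · have hd := (hasDerivAt_sub_sq_div_two_mul (σ ^ 2 + δ ^ 2 / 2) (m₂ / (2 * δ))
      x).congr_of_eventuallyEq
      ((eventuallyEq_of_abs_lt hK hin).fun_mul (eventuallyEq_of_abs_lt hf hin))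
    rw [hd.deriv, hf x, if_pos hin]
    ring
  · have hd := ((hasDerivAt_mul_exp_neg_sq_div (m₁ / Real.sqrt (2 * Real.pi * σ ^ 2)) (2 * σ ^ 2)
      x).const_mul (σ ^ 2)).congr_of_eventuallyEq
      ((eventuallyEq_of_lt_abs hK hout).fun_mul (eventuallyEq_of_lt_abs hf hout))
    rw [hd.deriv, hf x, if_neg (not_lt.mpr hout.le)]
    field_simp
    ring

/-- The piecewise Gaussian-uniform profile is a stationary solution of the 1D
surrogate Fokker–Planck equation away from the interface. -/
theorem stmt_3 (σ δ m₁ m₂ : ℝ) (hσ : 0 < σ) (hδ : 0 < δ)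
    (hm₁ : 0 < m₁) (hm₂ : 0 < m₂)
    (hmatch : m₂ / (2*δ) = m₁ / Real.sqrt (2 * Real.pi * σ^2) * Real.exp (-δ^2/(2*σ^2)))
    (K finfty : ℝ → ℝ)
    (hK : ∀ x, K x = if |x| < δ then σ^2 + δ^2/2 - x^2/2 else σ^2)
    (hf : ∀ x, finfty x = if |x| < δ then m₂ / (2*δ)
      else m₁ / Real.sqrt (2 * Real.pi * σ^2) * Real.exp (-x^2/(2*σ^2))) :
    Continuous finfty ∧
      ∀ x, |x| ≠ δ →
        x * finfty x + deriv (fun y => K y * finfty y) x = 0 :=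
  stmt_3_general σ δ m₁ m₂ hσ hmatch K finfty hK hf
end

section
/- Fix δ > 0 and m₂ ∈ (0,1). Then there exist unique m₁ > 0 and σ² > 0 solving the system m₁·(1 − erf(δ/√(2σ²))) + m₂ = 1 and (m₁/√(2πσ²))·exp(−δ²/(2σ²)) = m₂/(2δ). -/
/-!
In the variable `t = δ / √(2σ²)` the system reads `m₁ ∫_t^∞ e^{-s²} ds = (1 - m₂) √π / 2` and
`m₁ t e^{-t²} = m₂ √π / 2`, so `t` must solve `t e^{-t²} / ∫_t^∞ e^{-s²} ds = m₂ / (1 - m₂)`, after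
which `m₁` and `σ²` are determined. The tail bound `2t ∫_t^∞ e^{-s²} ds ≤ e^{-t²}` (integrate
`2t ≤ 2s`) shows that this ratio is at least `2t²` and has positive derivative on `t > 0`; as it
vanishes at `0`, the equation has exactly one positive root.
-/

noncomputable def erf (z : ℝ) : ℝ :=
  (2 / Real.sqrt Real.pi) * ∫ s in (0:ℝ)..z, Real.exp (-s^2)

open MeasureTheory Real Set Filter Topology

noncomputable def gaussianTail (t : ℝ) : ℝ := ∫ s in Ioi t, exp (-s ^ 2)

lemma integrable_exp_neg_sq : Integrable fun s : ℝ => exp (-s ^ 2) := by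
  simpa using integrable_exp_neg_mul_sq one_pos

lemma integrable_two_mul_mul_exp_neg_sq : Integrable fun s : ℝ => 2 * s * exp (-s ^ 2) := by
  simpa [mul_assoc] using (integrable_mul_exp_neg_mul_sq one_pos).const_mul 2

lemma gaussianTail_pos (t : ℝ) : 0 < gaussianTail t := by
  have hsupp : Function.support (fun s : ℝ => exp (-s ^ 2)) = univ :=
    Function.support_eq_univ fun s => (exp_pos _).ne'
  rw [gaussianTail, setIntegral_pos_iff_support_of_nonneg_ae
    (ae_of_all _ fun s => (exp_pos _).le) integrable_exp_neg_sq.integrableOn, hsupp]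
  simp

lemma gaussianTail_zero : gaussianTail 0 = √π / 2 := by
  simpa [gaussianTail] using integral_gaussian_Ioi 1

lemma gaussianTail_eq (t : ℝ) : gaussianTail t = √π / 2 - ∫ s in (0 : ℝ)..t, exp (-s ^ 2) := by
  rw [← gaussianTail_zero, gaussianTail, gaussianTail, ← intervalIntegral.integral_Ioi_sub_Ioi'
    integrable_exp_neg_sq.integrableOn integrable_exp_neg_sq.integrableOn]
  ring

lemma one_sub_erf (t : ℝ) : 1 - erf t = 2 / √π * gaussianTail t := by
  have : √π ≠ 0 := (sqrt_pos.2 pi_pos).ne'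
  rw [erf, gaussianTail_eq]
  field_simp

lemma hasDerivAt_gaussianTail (t : ℝ) : HasDerivAt gaussianTail (-exp (-t ^ 2)) t := by
  rw [show gaussianTail = fun u => √π / 2 - ∫ s in (0 : ℝ)..u, exp (-s ^ 2) from
    funext gaussianTail_eq]
  exact ((by fun_prop : Continuous fun s : ℝ => exp (-s ^ 2)).integral_hasStrictDerivAt
    0 t).hasDerivAt.const_sub _

lemma hasDerivAt_exp_neg_sq (x : ℝ) :
    HasDerivAt (fun u : ℝ => exp (-u ^ 2)) (-(2 * x) * exp (-x ^ 2)) x := by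
  have : HasDerivAt (fun u : ℝ => -u ^ 2) (-(2 * x)) x := by
    simpa using (hasDerivAt_pow 2 x).fun_neg
  simpa [mul_comm] using this.exp

lemma integral_Ioi_two_mul_exp_neg_sq (t : ℝ) :
    ∫ s in Ioi t, 2 * s * exp (-s ^ 2) = exp (-t ^ 2) := by
  have hderiv (x : ℝ) : HasDerivAt (fun u : ℝ => -exp (-u ^ 2)) (2 * x * exp (-x ^ 2)) x := by
    simpa using (hasDerivAt_exp_neg_sq x).fun_neg
  have hlim : Tendsto (fun u : ℝ => -exp (-u ^ 2)) atTop (𝓝 0) := by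
    simpa using (tendsto_exp_neg_atTop_nhds_zero.comp (tendsto_pow_atTop two_ne_zero)).neg
  rw [integral_Ioi_of_hasDerivAt_of_tendsto' (fun x _ => hderiv x)
    integrable_two_mul_mul_exp_neg_sq.integrableOn hlim]
  ring

lemma two_mul_mul_gaussianTail_le (t : ℝ) :
    2 * t * gaussianTail t ≤ exp (-t ^ 2) := by
  rw [gaussianTail, ← integral_const_mul, ← integral_Ioi_two_mul_exp_neg_sq]
  refine setIntegral_mono_on (integrable_exp_neg_sq.const_mul _).integrableOn
    integrable_two_mul_mul_exp_neg_sq.integrableOn measurableSet_Ioi fun s hs => ?_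
  gcongr
  exact le_of_lt hs

noncomputable def tailRatio (t : ℝ) : ℝ := t * exp (-t ^ 2) / gaussianTail t

lemma continuous_tailRatio : Continuous tailRatio :=
  (by fun_prop : Continuous fun t : ℝ => t * exp (-t ^ 2)).div
    (continuous_iff_continuousAt.2 fun t => (hasDerivAt_gaussianTail t).continuousAt)
    fun t => (gaussianTail_pos t).ne'

lemma hasDerivAt_tailRatio (t : ℝ) : HasDerivAt tailRatio
    (((1 - 2 * t ^ 2) * exp (-t ^ 2) * gaussianTail t + t * exp (-t ^ 2) * exp (-t ^ 2))
      / gaussianTail t ^ 2) t := by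
  have hnum : HasDerivAt (fun u : ℝ => u * exp (-u ^ 2)) ((1 - 2 * t ^ 2) * exp (-t ^ 2)) t :=
    ((hasDerivAt_id' t).fun_mul (hasDerivAt_exp_neg_sq t)).congr_deriv (by ring)
  exact (hnum.fun_div (hasDerivAt_gaussianTail t) (gaussianTail_pos t).ne').congr_deriv (by ring)

lemma strictMonoOn_tailRatio : StrictMonoOn tailRatio (Ici 0) := by
  refine strictMonoOn_of_deriv_pos (convex_Ici 0) continuous_tailRatio.continuousOn fun t ht => ?_
  rw [interior_Ici, mem_Ioi] at ht
  rw [(hasDerivAt_tailRatio t).deriv]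
  have hI := gaussianTail_pos t
  have hE := exp_pos (-t ^ 2)
  have hbound := two_mul_mul_gaussianTail_le t
  refine div_pos ?_ (by positivity)
  rcases le_or_gt 0 (1 - 2 * t ^ 2) with h | h
  · nlinarith [mul_nonneg (mul_nonneg h hE.le) hI.le, mul_pos (mul_pos ht hE) hE]
  · -- multiplied by `2t`, the numerator is at least `e^{-2t²}`
    nlinarith [mul_le_mul_of_nonpos_left hbound (mul_nonpos_of_nonpos_of_nonneg h.le hE.le),
      mul_pos hE hE]

lemma two_mul_sq_le_tailRatio {t : ℝ} (ht : 0 < t) : 2 * t ^ 2 ≤ tailRatio t := by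
  rw [tailRatio, le_div_iff₀ (gaussianTail_pos t)]
  nlinarith [mul_le_mul_of_nonneg_left (two_mul_mul_gaussianTail_le t) ht.le]

lemma existsUnique_tailRatio_eq {C : ℝ} (hC : 0 < C) : ∃! t, 0 < t ∧ tailRatio t = C := by
  have hT : 0 < √C := sqrt_pos.2 hC
  have hCT : C ≤ tailRatio √C := by
    nlinarith [two_mul_sq_le_tailRatio hT, sq_sqrt hC.le]
  obtain ⟨t, ⟨ht, -⟩, htC⟩ := intermediate_value_Ioc hT.le continuous_tailRatio.continuousOn
    ⟨by simpa [tailRatio] using hC, hCT⟩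
  exact ⟨t, ⟨ht, htC⟩, fun u ⟨hu, huC⟩ =>
    strictMonoOn_tailRatio.injOn hu.le ht.le (huC.trans htC.symm)⟩

lemma existsUnique_gaussianTail_system {A B : ℝ} (hA : 0 < A) (hB : 0 < B) :
    ∃! p : ℝ × ℝ, 0 < p.1 ∧ 0 < p.2 ∧
      p.1 * gaussianTail p.2 = A ∧ p.1 * (p.2 * exp (-p.2 ^ 2)) = B := by
  obtain ⟨t, ⟨ht, htB⟩, huniq⟩ := existsUnique_tailRatio_eq (div_pos hB hA)
  have hI := gaussianTail_pos t
  refine ⟨(A / gaussianTail t, t), ⟨div_pos hA hI, ht, div_mul_cancel₀ A hI.ne', ?_⟩, ?_⟩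
  · calc A / gaussianTail t * (t * exp (-t ^ 2)) = A * tailRatio t := by rw [tailRatio]; ring
      _ = B := by rw [htB]; field_simp
  · rintro ⟨a, u⟩ ⟨ha, hu, hA', hB'⟩
    have hut : u = t := huniq u ⟨hu, by rw [tailRatio, ← mul_div_mul_left _ _ ha.ne', hA', hB']⟩
    subst hut
    simp only [Prod.mk.injEq, and_true]
    rw [← hA', mul_div_cancel_right₀ _ hI.ne']

lemma sqrt_two_mul_div_sq {δ t : ℝ} (hδ : 0 ≤ δ) (ht : 0 < t) :
    √(2 * (δ ^ 2 / (2 * t ^ 2))) = δ / t := by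
  rw [show 2 * (δ ^ 2 / (2 * t ^ 2)) = (δ / t) ^ 2 by field_simp, sqrt_sq (by positivity)]

lemma div_sq_div_sqrt_two_mul {δ s : ℝ} (hδ : δ ≠ 0) (hs : 0 < s) :
    δ ^ 2 / (2 * (δ / √(2 * s)) ^ 2) = s := by
  rw [div_pow, sq_sqrt (by positivity)]
  field_simp

lemma mass_continuity_iff_gaussianTail {δ s m₁ m₂ : ℝ} (hδ : 0 < δ) (hs : 0 < s) :
    (m₁ * (1 - erf (δ / √(2 * s))) + m₂ = 1 ∧
      m₁ / √(2 * π * s) * exp (-δ ^ 2 / (2 * s)) = m₂ / (2 * δ)) ↔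
    (m₁ * gaussianTail (δ / √(2 * s)) = (1 - m₂) * (√π / 2) ∧
      m₁ * (δ / √(2 * s) * exp (-(δ / √(2 * s)) ^ 2)) = m₂ * (√π / 2)) := by
  have hπ : 0 < √π := sqrt_pos.2 pi_pos
  have hr : 0 < √(2 * s) := sqrt_pos.2 (by positivity)
  have hsqrt : √(2 * π * s) = √π * √(2 * s) := by
    rw [← sqrt_mul pi_pos.le]; ring_nf
  have hexp : -δ ^ 2 / (2 * s) = -(δ / √(2 * s)) ^ 2 := by
    rw [div_pow, sq_sqrt (by positivity), neg_div]
  rw [one_sub_erf, hsqrt, hexp]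
  refine and_congr ⟨fun h => ?_, fun h => ?_⟩ ⟨fun h => ?_, fun h => ?_⟩
  all_goals field_simp at h ⊢; linarith

/-- Existence and uniqueness of (m₁, σ²) solving the 1D matching system. -/
theorem stmt_5 (δ m₂ : ℝ) (hδ : 0 < δ) (hm₂ : m₂ ∈ Set.Ioo (0:ℝ) 1) :
    ∃! p : ℝ × ℝ, 0 < p.1 ∧ 0 < p.2 ∧
      p.1 * (1 - erf (δ / Real.sqrt (2 * p.2))) + m₂ = 1 ∧
      p.1 / Real.sqrt (2 * Real.pi * p.2) * Real.exp (-δ^2/(2*p.2)) = m₂ / (2*δ) := by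
  obtain ⟨hm₀, hm₁⟩ := hm₂
  have hπ : 0 < √π / 2 := by positivity
  obtain ⟨⟨a, t⟩, ⟨ha, ht, hsys⟩, huniq⟩ :=
    existsUnique_gaussianTail_system (mul_pos (sub_pos.2 hm₁) hπ) (mul_pos hm₀ hπ)
  refine ⟨(a, δ ^ 2 / (2 * t ^ 2)), ⟨ha, by positivity, ?_⟩, ?_⟩
  · rwa [mass_continuity_iff_gaussianTail hδ (by positivity), sqrt_two_mul_div_sq hδ.le ht, div_div_cancel₀ hδ.ne']
  · rintro ⟨m₁, s⟩ ⟨hpos, hs, hmatch⟩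
    rw [mass_continuity_iff_gaussianTail hδ hs] at hmatch
    obtain ⟨rfl, rfl⟩ := Prod.mk.inj (huniq (m₁, δ / √(2 * s)) ⟨hpos, by positivity, hmatch⟩)
    rw [div_sq_div_sqrt_two_mul hδ.ne' hs]
end
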